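/- Let T be a satisfiable first-order theory in a language L. Then T is stable if and only if for every model M of T, every n, and every ℚ-indexed sequence (a_q), with a_q : Fin n → M, that is order-indiscernible, the sequence is set-indiscernible. -/

import Mathlib

/-!
If a formula distinguishes the order of two adjacent entries of an order-indiscernible sequence,
filling the gap between them with infinitely many interleaved indices gives it the order
property; since adjacent transpositions generate the symmetric group, in a stable theory every
order-indiscernible sequence is set-indiscernible. Conversely, if `φ(a_i, b_j) ↔ i ≤ j`, Ramsey's
theorem (via iterated limits along a nonprincipal ultrafilter) and compactness turn the tuples
`a_i ⌢ b_i` into an order-indiscernible `ℚ`-indexed sequence `d` with `φ(d_0, d_1)` and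
`¬ φ(d_1, d_0)`, which is not set-indiscernible.
-/

open FirstOrder FirstOrder.Language

universe u v

variable {L : FirstOrder.Language.{u, v}}

/-- An `L`-formula `φ` with free variables in `Fin m ⊕ Fin n` has the order property in an
`L`-structure `M` if there are sequences `a : ℕ → (Fin m → M)` and `b : ℕ → (Fin n → M)`
such that `φ(a i, b j)` holds iff `i ≤ j`. -/
def HasOrderProperty {m n : ℕ} (φ : L.Formula (Fin m ⊕ Fin n))
    (M : Type w) [L.Structure M] : Prop :=
  ∃ (a : ℕ → Fin m → M) (b : ℕ → Fin n → M),
    ∀ i j : ℕ, φ.Realize (Sum.elim (a i) (b j)) ↔ i ≤ j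

/-- A satisfiable `L`-theory `T` is stable if no `L`-formula has the order property in any
model of `T`. -/
def IsStableTheory (T : L.Theory) : Prop :=
  ∀ (m n : ℕ) (φ : L.Formula (Fin m ⊕ Fin n)) (M : Theory.ModelType.{u, v, max u v} T),
    ¬ HasOrderProperty φ M

/-- A `ℚ`-indexed sequence of `n`-tuples of `M` is order-indiscernible if any two strictly
increasing tuples of indices give tuples satisfying the same formulas. -/
def OrderIndiscernible {M : Type w} [L.Structure M] {n : ℕ} (a : ℚ → Fin n → M) : Prop :=
  ∀ (r : ℕ) (ψ : L.Formula (Fin r × Fin n)) (q q' : Fin r → ℚ),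
    StrictMono q → StrictMono q' →
    (ψ.Realize (fun p => a (q p.1) p.2) ↔ ψ.Realize (fun p => a (q' p.1) p.2))

/-- A `ℚ`-indexed sequence of `n`-tuples of `M` is set-indiscernible if any two tuples of
pairwise distinct (not necessarily increasing) indices give tuples satisfying the same
formulas. -/
def SetIndiscernible {M : Type w} [L.Structure M] {n : ℕ} (a : ℚ → Fin n → M) : Prop :=
  ∀ (r : ℕ) (ψ : L.Formula (Fin r × Fin n)) (q q' : Fin r → ℚ),
    Function.Injective q → Function.Injective q' →
    (ψ.Realize (fun p => a (q p.1) p.2) ↔ ψ.Realize (fun p => a (q' p.1) p.2))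

open Filter

namespace Ramsey

def IsHomogeneous {r : ℕ} (P : (Fin r → ℕ) → Prop) (x : ℕ → ℕ) : Prop :=
  ∀ g g' : Fin r → ℕ, StrictMono g → StrictMono g' → (P (x ∘ g) ↔ P (x ∘ g'))

theorem IsHomogeneous.comp {r : ℕ} {P : (Fin r → ℕ) → Prop} {x y : ℕ → ℕ}
    (hx : IsHomogeneous P x) (hy : StrictMono y) : IsHomogeneous P (x ∘ y) :=
  fun _ _ hg hg' => hx _ _ (hy.comp hg) (hy.comp hg')

-- `iterLim P k l`: for `U`-almost all `y₁`, …, for `U`-almost all `yₖ`, `P (l ++ [y₁, …, yₖ])`,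
-- where `U` is the hyperfilter (a nonprincipal ultrafilter) on `ℕ`
def iterLim (P : List ℕ → Prop) : ℕ → List ℕ → Prop
  | 0, l => P l
  | k + 1, l => ∀ᶠ y in (hyperfilter ℕ : Filter ℕ), iterLim P k (l ++ [y])

theorem eventually_iterLim_append_iff (P : List ℕ → Prop) (k : ℕ) (l : List ℕ) :
    ∀ᶠ y in (hyperfilter ℕ : Filter ℕ), (iterLim P k (l ++ [y]) ↔ iterLim P (k + 1) l) := by
  by_cases h : iterLim P (k + 1) l
  · exact h.mono fun y hy => iff_of_true hy h
  · exact (Ultrafilter.eventually_not.2 h).mono fun y hy => iff_of_false hy h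

-- `y` may follow the terms `prev`: appending it to a list of fewer than `r` earlier terms does
-- not change the iterated limit that decides the colour of its completions
def IsGoodNext (P : List ℕ → Prop) (r : ℕ) {t : ℕ} (prev : Fin t → ℕ) (y : ℕ) : Prop :=
  (∀ s, prev s < y) ∧ ∀ (j : Fin r) (g : Fin j → Fin t),
    (iterLim P (r - (j + 1)) (List.ofFn (prev ∘ g) ++ [y]) ↔
      iterLim P (r - (j + 1) + 1) (List.ofFn (prev ∘ g)))

theorem eventually_isGoodNext (P : List ℕ → Prop) (r : ℕ) {t : ℕ} (prev : Fin t → ℕ) :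
    ∀ᶠ y in (hyperfilter ℕ : Filter ℕ), IsGoodNext P r prev y := by
  refine (eventually_all.2 fun s => ?_).and
    (eventually_all.2 fun j => eventually_all.2 fun g => eventually_iterLim_append_iff _ _ _)
  exact (hyperfilter_le_cofinite.trans Nat.cofinite_eq_atTop.le) (eventually_gt_atTop (prev s))

noncomputable def homSeq (P : List ℕ → Prop) (r : ℕ) : ℕ → ℕ
  | t => Classical.epsilon (IsGoodNext P r fun s : Fin t => homSeq P r s)
decreasing_by exact s.2

theorem homSeq_isGoodNext (P : List ℕ → Prop) (r t : ℕ) :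
    IsGoodNext P r (fun s : Fin t => homSeq P r s) (homSeq P r t) := by
  rw [homSeq]
  exact Classical.epsilon_spec (eventually_isGoodNext P r _).exists

theorem strictMono_homSeq (P : List ℕ → Prop) (r : ℕ) : StrictMono (homSeq P r) :=
  fun s t hst => (homSeq_isGoodNext P r t).1 ⟨s, hst⟩

theorem iterLim_homSeq (P : List ℕ → Prop) (r : ℕ) :
    ∀ j ≤ r, ∀ h : Fin j → ℕ, StrictMono h →
      (iterLim P (r - j) (List.ofFn (homSeq P r ∘ h)) ↔ iterLim P r []) := by
  intro j
  induction j with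
  | zero => intro _ h _; simp
  | succ j ih =>
    intro hj h hh
    have hlt : ∀ i : Fin j, h i.castSucc < h (Fin.last j) := fun i => hh (Fin.castSucc_lt_last i)
    have hnext := (homSeq_isGoodNext P r (h (Fin.last j))).2 ⟨j, hj⟩ fun i => ⟨_, hlt i⟩
    have hsplit : List.ofFn (homSeq P r ∘ h) =
        List.ofFn (homSeq P r ∘ h ∘ Fin.castSucc) ++ [homSeq P r (h (Fin.last j))] := by
      rw [List.ofFn_succ']
      simp [List.concat_eq_append, Function.comp_def]
    rw [hsplit]
    refine hnext.trans ?_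
    rw [show r - (j + 1) + 1 = r - j by omega]
    exact ih (by omega) _ (hh.comp Fin.strictMono_castSucc)

theorem exists_strictMono_isHomogeneous {r : ℕ} (P : (Fin r → ℕ) → Prop) :
    ∃ x, StrictMono x ∧ IsHomogeneous P x := by
  let P' : List ℕ → Prop := fun l => P fun i => l.getD i 0
  have hP' : ∀ f : Fin r → ℕ, P' (List.ofFn f) ↔ P f := fun f => by simp [P']
  refine ⟨homSeq P' r, strictMono_homSeq P' r, fun g g' hg hg' => ?_⟩
  have hP : ∀ g : Fin r → ℕ, StrictMono g → (P (homSeq P' r ∘ g) ↔ iterLim P' r []) := by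
    intro g hg
    have := iterLim_homSeq P' r r le_rfl g hg
    rwa [Nat.sub_self, iterLim, hP'] at this
  exact (hP g hg).trans (hP g' hg').symm

theorem exists_strictMono_forall_isHomogeneous {ι : Type*} {K : ι → ℕ}
    (P : ∀ i, (Fin (K i) → ℕ) → Prop) (s : Finset ι) :
    ∃ x, StrictMono x ∧ ∀ i ∈ s, IsHomogeneous (P i) x := by
  classical
  induction s using Finset.induction with
  | empty => exact ⟨id, strictMono_id, by simp⟩
  | insert i s _ ih =>
    obtain ⟨x, hx, hxs⟩ := ih
    obtain ⟨y, hy, hyi⟩ := exists_strictMono_isHomogeneous fun g => P i (x ∘ g)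
    refine ⟨x ∘ y, hx.comp hy, fun j hj => ?_⟩
    rcases Finset.mem_insert.1 hj with rfl | hj
    · exact hyi
    · exact (hxs j hj).comp hy

end Ramsey

theorem exists_modelType_realize_of_directed {T : L.Theory} {α : Type} {ι : Type*} [Nonempty ι]
    {Φ : ι → Set (L.Formula α)} (hΦ : Directed (· ⊆ ·) Φ)
    (h : ∀ i, ∃ (M : Theory.ModelType.{u, v, w} T) (x : α → M), ∀ φ ∈ Φ i, φ.Realize x) :
    ∃ (M : Theory.ModelType.{u, v, max u v} T) (x : α → M), ∀ i, ∀ φ ∈ Φ i, φ.Realize x := by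
  let S : ι → L[[α]].Theory := fun i =>
    (L.lhomWithConstants α).onTheory T ∪ Formula.equivSentence '' Φ i
  have hS : Directed (· ⊆ ·) S :=
    Directed.mono_comp (· ⊆ ·) (g := fun s => _ ∪ Formula.equivSentence '' s)
      (fun _ _ h => Set.union_subset_union_right _ (Set.image_mono h)) hΦ
  have hsat : ∀ i, (S i).IsSatisfiable := by
    intro i
    obtain ⟨M, x, hx⟩ := h i
    let := constantsOn.structure x
    have : M ⊨ S i := by
      refine Theory.model_union_iff.2 ⟨(LHom.onTheory_model _ _).2 M.is_model, ?_⟩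
      refine (Theory.model_iff _).2 ?_
      rintro _ ⟨φ, hφ, rfl⟩
      exact (Formula.realize_equivSentence M φ).2 (hx φ hφ)
    exact Theory.Model.isSatisfiable M
  obtain ⟨M'⟩ := (Theory.isSatisfiable_directed_union_iff hS).2 hsat
  have hT : (L.lhomWithConstants α).onTheory T ⊆ ⋃ i, S i :=
    Set.subset_union_left.trans (Set.subset_iUnion S (Classical.arbitrary ι))
  refine ⟨(M'.subtheoryModel hT).reduct (L.lhomWithConstants α), fun a => (L.con a : M'),
    fun i φ hφ => ?_⟩
  have hmem : Formula.equivSentence φ ∈ ⋃ i, S i :=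
    Set.mem_iUnion.2 ⟨i, Set.mem_union_right _ ⟨φ, hφ, rfl⟩⟩
  let : L.Structure M' := (L.lhomWithConstants α).reduct M'
  exact (Formula.realize_equivSentence M' φ).1 (Theory.realize_sentence_of_mem _ hmem)

theorem Finset.strictMonoOn_card_filter_lt {α : Type*} [Preorder α] [DecidableLT α]
    (Q : Finset α) :
    StrictMonoOn (fun s => (Q.filter (· < s)).card) Q := by
  intro s hs t _ hst
  refine Finset.card_lt_card ⟨fun y hy => ?_, fun h => ?_⟩
  · exact Finset.mem_filter.2 ⟨(Finset.mem_filter.1 hy).1, (Finset.mem_filter.1 hy).2.trans hst⟩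
  · exact lt_irrefl s (Finset.mem_filter.1 (h (Finset.mem_filter.2 ⟨hs, hst⟩))).2

theorem exists_orderIndiscernible_of_forall_strictMono {T : L.Theory}
    (M₀ : Theory.ModelType.{u, v, w} T) {N : ℕ} (c : ℕ → Fin N → M₀) :
    ∃ (M : Theory.ModelType.{u, v, max u v} T) (d : ℚ → Fin N → M),
      OrderIndiscernible (L := L) d ∧
        ∀ (r : ℕ) (ψ : L.Formula (Fin r × Fin N)),
          (∀ g : Fin r → ℕ, StrictMono g → ψ.Realize (fun p => c (g p.1) p.2)) →
            ∀ q : Fin r → ℚ, StrictMono q → ψ.Realize (fun p => d (q p.1) p.2) := by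
  classical
  -- the variable `(s, k)` stands for the `k`-th coordinate of the `s`-th tuple
  let atTuple (ψ : Σ r, L.Formula (Fin r × Fin N)) (q : Fin ψ.1 → ℚ) : L.Formula (ℚ × Fin N) :=
    ψ.2.relabel fun p => (q p.1, p.2)
  let Φ (i : Finset ℚ × Finset (Σ r, L.Formula (Fin r × Fin N))) : Set (L.Formula (ℚ × Fin N)) :=
    {χ | ∃ ψ ∈ i.2, ∃ q q' : Fin ψ.1 → ℚ, StrictMono q ∧ StrictMono q' ∧
        (∀ k, q k ∈ i.1) ∧ (∀ k, q' k ∈ i.1) ∧ χ = (atTuple ψ q).iff (atTuple ψ q')} ∪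
      {χ | ∃ ψ ∈ i.2, (∀ g, StrictMono g → ψ.2.Realize (fun p => c (g p.1) p.2)) ∧
        ∃ q : Fin ψ.1 → ℚ, StrictMono q ∧ (∀ k, q k ∈ i.1) ∧ χ = atTuple ψ q}
  have hΦ : Monotone Φ := by
    rintro ⟨Q, Ψ⟩ ⟨Q', Ψ'⟩ ⟨hQ, hΨ⟩
    refine Set.union_subset_union ?_ ?_
    · rintro _ ⟨ψ, hψ, q, q', hq, hq', hqQ, hqQ', rfl⟩
      exact ⟨ψ, hΨ hψ, q, q', hq, hq', fun k => hQ (hqQ k), fun k => hQ (hqQ' k), rfl⟩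
    · rintro _ ⟨ψ, hψ, hc, q, hq, hqQ, rfl⟩
      exact ⟨ψ, hΨ hψ, hc, q, hq, fun k => hQ (hqQ k), rfl⟩
  -- each finite part of `Φ` is realized along a Ramsey-homogeneous subsequence of `c`
  have hrealize : ∀ i, ∃ (M : Theory.ModelType.{u, v, w} T) (x : ℚ × Fin N → M),
      ∀ χ ∈ Φ i, χ.Realize x := by
    rintro ⟨Q, Ψ⟩
    obtain ⟨x, hx, hhom⟩ := Ramsey.exists_strictMono_forall_isHomogeneous (K := Sigma.fst)
      (fun ψ g => ψ.2.Realize fun p => c (g p.1) p.2) Ψ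
    have hQ := Q.strictMonoOn_card_filter_lt
    have hmono : ∀ {r} (q : Fin r → ℚ), StrictMono q → (∀ k, q k ∈ Q) →
        StrictMono fun k => (Q.filter (· < q k)).card :=
      fun q hq hqQ _ _ h => hQ (hqQ _) (hqQ _) (hq h)
    refine ⟨M₀, fun p => c (x (Q.filter (· < p.1)).card) p.2, ?_⟩
    rintro _ (⟨ψ, hψ, q, q', hq, hq', hqQ, hqQ', rfl⟩ | ⟨ψ, hψ, hc, q, hq, hqQ, rfl⟩)
    · simp only [atTuple, Formula.realize_iff, Formula.realize_relabel]
      exact hhom ψ hψ _ _ (hmono q hq hqQ) (hmono q' hq' hqQ')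
    · simp only [atTuple, Formula.realize_relabel]
      exact hc _ (hx.comp (hmono q hq hqQ))
  obtain ⟨M, x, hx⟩ := exists_modelType_realize_of_directed hΦ.directed_le hrealize
  refine ⟨M, fun s k => x (s, k), fun r ψ q q' hq hq' => ?_, fun r ψ hc q hq => ?_⟩
  · have := hx (Finset.univ.image q ∪ Finset.univ.image q', {⟨r, ψ⟩}) _
      (Or.inl ⟨⟨r, ψ⟩, Finset.mem_singleton_self _, q, q', hq, hq', by simp, by simp, rfl⟩)
    simpa only [atTuple, Formula.realize_iff, Formula.realize_relabel, Function.comp_def] using this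
  · have := hx (Finset.univ.image q, {⟨r, ψ⟩}) _
      (Or.inr ⟨⟨r, ψ⟩, Finset.mem_singleton_self _, hc, q, hq, by simp, rfl⟩)
    simpa only [atTuple, Formula.realize_relabel, Function.comp_def] using this

section Stable

variable {T : L.Theory}

theorem IsStableTheory.not_forall_realize_iff_le (hS : IsStableTheory T)
    (M : Theory.ModelType.{u, v, max u v} T) {α β : Type*} [Finite α] [Finite β]
    (φ : L.Formula (α ⊕ β)) (a : ℕ → α → M) (b : ℕ → β → M) :
    ¬ ∀ i j, φ.Realize (Sum.elim (a i) (b j)) ↔ i ≤ j := by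
  intro h
  obtain ⟨m, ⟨e⟩⟩ := Finite.exists_equiv_fin α
  obtain ⟨n, ⟨e'⟩⟩ := Finite.exists_equiv_fin β
  refine hS m n (φ.relabel (Sum.map e e')) M
    ⟨fun i => a i ∘ e.symm, fun j => b j ∘ e'.symm, fun i j => ?_⟩
  rw [Formula.realize_relabel, Sum.elim_comp_map, ← h i j]
  simp [Function.comp_assoc]

theorem IsStableTheory.iff_of_forall_realize (hS : IsStableTheory T)
    (M : Theory.ModelType.{u, v, max u v} T) {α β : Type*} [Finite α] [Finite β]
    (φ : L.Formula (α ⊕ β)) (a : ℕ → α → M) (b : ℕ → β → M) {P Q : Prop}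
    (hle : ∀ i j, i ≤ j → (φ.Realize (Sum.elim (a i) (b j)) ↔ P))
    (hlt : ∀ i j, j < i → (φ.Realize (Sum.elim (a i) (b j)) ↔ Q)) : P ↔ Q := by
  classical
  by_contra hPQ
  refine hS.not_forall_realize_iff_le M (if P then φ else ∼φ) a b fun i j => ?_
  have hφ : ∀ w : α ⊕ β → M, (if P then φ else ∼φ).Realize w ↔ (φ.Realize w ↔ P) := by
    intro w
    split_ifs <;> simp [*]
  rcases le_or_gt i j with h | h
  · simp [hφ, hle i j h, h]
  · simp only [hφ, hlt i j h, h.not_ge, iff_false]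
    tauto

end Stable

def adjTuple {n : ℕ} (i : Fin n) (u v : ℚ) (t : Fin (n + 1)) : ℚ :=
  if t = i.castSucc then (i : ℕ) + u else if t = i.succ then (i : ℕ) + v else (t : ℕ)

theorem strictMono_adjTuple {n : ℕ} (i : Fin n) {u v : ℚ} (hu : 0 ≤ u) (huv : u < v)
    (hv : v < 1) : StrictMono (adjTuple i u v) := by
  refine Fin.strictMono_iff_lt_succ.2 fun t => ?_
  simp only [adjTuple, Fin.ext_iff, Fin.val_castSucc, Fin.val_succ]
  split_ifs <;> first | omega | (qify at *; linarith)

theorem adjTuple_comp_swap {n : ℕ} (i : Fin n) (u v : ℚ) :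
    adjTuple i v u ∘ Equiv.swap i.castSucc i.succ = adjTuple i u v := by
  ext t
  simp only [Function.comp_apply, adjTuple, Equiv.swap_apply_def]
  split_ifs <;> simp_all [Fin.ext_iff]

theorem strictMono_div_add_one {K : Type*} [Field K] [LinearOrder K] [IsStrictOrderedRing K] :
    StrictMono fun c : ℕ => (c : K) / (c + 1) := by
  intro c d h
  have : (c : K) < d := by exact_mod_cast h
  rw [div_lt_div_iff₀ (by positivity) (by positivity)]
  linarith

section Indiscernible

variable {T : L.Theory} {M : Theory.ModelType.{u, v, max u v} T} {N : ℕ} {a : ℚ → Fin N → M}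

theorem OrderIndiscernible.realize_comp_swap (ha : OrderIndiscernible (L := L) a)
    (hS : IsStableTheory T) {r : ℕ} (ψ : L.Formula (Fin (r + 1) × Fin N))
    {q : Fin (r + 1) → ℚ} (hq : StrictMono q) (i : Fin r) :
    ψ.Realize (fun p => a (q (Equiv.swap i.castSucc i.succ p.1)) p.2) ↔
      ψ.Realize (fun p => a (q p.1) p.2) := by
  let f : ℕ → ℚ := fun c => c / (c + 1)
  have hf0 : ∀ c, 0 ≤ f c := fun c => by positivity
  have hf1 : ∀ c, f c < 1 := fun c => (div_lt_one (by positivity)).2 (by linarith)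
  -- `f (2 * l) < f (2 * j + 1)` holds exactly when `l ≤ j`
  have hw : ∀ l j, l ≤ j → StrictMono (adjTuple i (f (2 * l)) (f (2 * j + 1))) := fun l j h =>
    strictMono_adjTuple i (hf0 _) (strictMono_div_add_one (by omega)) (hf1 _)
  have hw' : ∀ l j, j < l → StrictMono (adjTuple i (f (2 * j + 1)) (f (2 * l))) := fun l j h =>
    strictMono_adjTuple i (hf0 _) (strictMono_div_add_one (by omega)) (hf1 _)
  let G : Fin (r + 1) × Fin N → Fin N ⊕ (Fin (r + 1) × Fin N) :=
    fun p => if p.1 = i.castSucc then .inl p.2 else .inr p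
  let A : ℕ → Fin N → M := fun l => a ((i : ℕ) + f (2 * l))
  let B : ℕ → Fin (r + 1) × Fin N → M := fun j p => a (adjTuple i 0 (f (2 * j + 1)) p.1) p.2
  have hG : ∀ l j, (ψ.relabel G).Realize (Sum.elim (A l) (B j)) ↔
      ψ.Realize (fun p => a (adjTuple i (f (2 * l)) (f (2 * j + 1)) p.1) p.2) := by
    intro l j
    rw [Formula.realize_relabel]
    congr! 2 with p
    by_cases hp : p.1 = i.castSucc <;> simp [G, A, B, adjTuple, hp]
  refine (hS.iff_of_forall_realize M (ψ.relabel G) A B (fun l j h => ?_) (fun l j h => ?_)).symm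
  · rw [hG]
    exact ha _ ψ _ q (hw l j h) hq
  · rw [hG, ← adjTuple_comp_swap]
    have h := ha _ (ψ.relabel (Prod.map (Equiv.swap i.castSucc i.succ) id)) _ q (hw' l j h) hq
    rwa [Formula.realize_relabel, Formula.realize_relabel] at h

theorem OrderIndiscernible.realize_comp_perm (ha : OrderIndiscernible (L := L) a)
    (hS : IsStableTheory T) {r : ℕ} (σ : Equiv.Perm (Fin r)) (ψ : L.Formula (Fin r × Fin N))
    {q : Fin r → ℚ} (hq : StrictMono q) :
    ψ.Realize (fun p => a (q (σ p.1)) p.2) ↔ ψ.Realize (fun p => a (q p.1) p.2) := by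
  cases r with
  | zero => rw [Subsingleton.elim σ 1]; rfl
  | succ r =>
    have hσ := Equiv.Perm.mclosure_swap_castSucc_succ r ▸ Submonoid.mem_top σ
    induction hσ using Submonoid.closure_induction generalizing ψ with
    | mem τ hτ =>
      obtain ⟨i, rfl⟩ := hτ
      exact ha.realize_comp_swap hS ψ hq i
    | one => rfl
    | mul σ τ _ _ hσ hτ =>
      -- composing with `τ` is relabelling the formula
      have hrel := hσ (ψ.relabel (Prod.map τ id))
      simp only [Formula.realize_relabel] at hrel
      exact hrel.trans (hτ ψ)

theorem OrderIndiscernible.setIndiscernible (ha : OrderIndiscernible (L := L) a)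
    (hS : IsStableTheory T) : SetIndiscernible (L := L) a := by
  have hsort : ∀ {r} (ψ : L.Formula (Fin r × Fin N)) (q : Fin r → ℚ), Function.Injective q →
      StrictMono (q ∘ Tuple.sort q) ∧ (ψ.Realize (fun p => a (q p.1) p.2) ↔
        ψ.Realize (fun p => a ((q ∘ Tuple.sort q) p.1) p.2)) := by
    intro r ψ q hq
    have hmono : StrictMono (q ∘ Tuple.sort q) :=
      (Tuple.monotone_sort q).strictMono_of_injective (hq.comp (Tuple.sort q).injective)
    refine ⟨hmono, ?_⟩
    simpa using ha.realize_comp_perm hS (Tuple.sort q)⁻¹ ψ hmono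
  intro r ψ q q' hq hq'
  obtain ⟨hmono, hψ⟩ := hsort ψ q hq
  obtain ⟨hmono', hψ'⟩ := hsort ψ q' hq'
  exact hψ.trans ((ha r ψ _ _ hmono hmono').trans hψ'.symm)

end Indiscernible

theorem IsStableTheory.of_forall_setIndiscernible {T : L.Theory}
    (h : ∀ (M : Theory.ModelType.{u, v, max u v} T) (n : ℕ) (a : ℚ → Fin n → M),
      OrderIndiscernible (L := L) a → SetIndiscernible (L := L) a) :
    IsStableTheory T := by
  rintro m n φ M₀ ⟨a, b, hab⟩
  let c : ℕ → Fin (m + n) → M₀ := fun i => Fin.append (a i) (b i)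
  let θ : L.Formula (Fin 2 × Fin (m + n)) :=
    φ.relabel (Sum.elim (fun k => (0, Fin.castAdd n k)) (fun k => (1, Fin.natAdd m k)))
  have hθ : ∀ g : Fin 2 → ℕ, θ.Realize (fun p => c (g p.1) p.2) ↔ g 0 ≤ g 1 := by
    intro g
    rw [Formula.realize_relabel, ← hab]
    congr! 1
    ext (k | k) <;> simp [c]
  let τ := Equiv.swap (0 : Fin 2) 1
  have hθτ : ∀ g : Fin 2 → ℕ,
      (θ.relabel (Prod.map τ id)).Realize (fun p => c (g p.1) p.2) ↔ g 1 ≤ g 0 := by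
    intro g
    rw [Formula.realize_relabel]
    exact hθ (g ∘ τ)
  obtain ⟨M, d, hd, hEM⟩ := exists_orderIndiscernible_of_forall_strictMono M₀ c
  let q : Fin 2 → ℚ := fun k => (k : ℕ)
  have hq : StrictMono q := fun k k' hk => by simpa [q] using hk
  have hdq := hEM 2 (θ ⊓ ∼(θ.relabel (Prod.map τ id)))
    (fun g hg => by
      simp only [Formula.realize_inf, Formula.realize_not, hθ, hθτ]
      exact ⟨(hg zero_lt_one).le, (hg zero_lt_one).not_ge⟩) q hq
  rw [Formula.realize_inf, Formula.realize_not] at hdq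
  exact hdq.2 (Formula.realize_relabel.2
    ((h M _ d hd 2 θ q (q ∘ τ) hq.injective (hq.injective.comp τ.injective)).1 hdq.1))

theorem isStableTheory_iff_orderIndiscernible_setIndiscernible_general (T : L.Theory) :
    IsStableTheory T ↔
      ∀ (M : Theory.ModelType.{u, v, max u v} T) (n : ℕ) (a : ℚ → Fin n → M),
        OrderIndiscernible (L := L) a → SetIndiscernible (L := L) a :=
  ⟨fun hS _ _ _ ha => ha.setIndiscernible hS, IsStableTheory.of_forall_setIndiscernible⟩

/-- A satisfiable theory `T` is stable if and only if, in every model of `T`, every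
order-indiscernible `ℚ`-indexed sequence of `n`-tuples is set-indiscernible. -/
theorem isStableTheory_iff_orderIndiscernible_setIndiscernible (T : L.Theory)
    (hT : T.IsSatisfiable) :
    IsStableTheory T ↔
      ∀ (M : Theory.ModelType.{u, v, max u v} T) (n : ℕ) (a : ℚ → Fin n → M),
        OrderIndiscernible (L := L) a → SetIndiscernible (L := L) a :=
  isStableTheory_iff_orderIndiscernible_setIndiscernible_general T
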